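/- arXiv:2309.15185 — 2 statements merged into one kernel-verified Lean document; each statement's English description precedes it below -/
import Mathlib

section
/- Every simple rank-r matroid with fewer than 2^r − 1 elements has a line containing exactly two points. -/
open Matroid Set

namespace SGK

variable {α : Type*}

/-- The rank of a set `X` in a matroid `M`, as a value in `ℕ∞`. -/
noncomputable def rk (M : Matroid α) (X : Set α) : ℕ∞ :=
  sSup {n : ℕ∞ | ∃ I, M.Indep I ∧ I ⊆ X ∧ I.encard = n}

/-- The rank of a matroid. -/
noncomputable def Rank (M : Matroid α) : ℕ∞ := rk M M.E

/-- A matroid is simple if it has no loops and no parallel pairs,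
equivalently every set of at most two ground elements is independent. -/
def Simple (M : Matroid α) : Prop := ∀ e ∈ M.E, ∀ f ∈ M.E, M.Indep {e, f}

/-- `M` is representable over the field `F`: there is a map from the ground set to a
finite-dimensional `F`-vector space whose linear independence structure matches `M`. -/
def IsRep (F : Type*) [Field F] (M : Matroid α) : Prop :=
  ∃ (n : ℕ) (v : α → (Fin n → F)),
    ∀ I ⊆ M.E, (M.Indep I ↔ LinearIndependent F (I.restrict v))

/-- The points (rank-1 flats) of `M` contained in the set `X`. -/
def points (M : Matroid α) (X : Set α) : Set (Set α) :=
  {P | M.IsFlat P ∧ P ⊆ X ∧ rk M P = 1}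

/-- A line of `M` is a rank-2 flat. -/
def IsLine (M : Matroid α) (L : Set α) : Prop := M.IsFlat L ∧ rk M L = 2

/-- A circuit is a minimal dependent set. -/
def Circuit (M : Matroid α) (C : Set α) : Prop := Minimal M.Dep C

/-- A coloop is an element contained in every base. -/
def Coloop (M : Matroid α) (e : α) : Prop := ∀ B, M.IsBase B → e ∈ B

/-- Contraction of the set `C`, defined by duality: `M ／ C = (M✶ ＼ C)✶`. -/
def con (M : Matroid α) (C : Set α) : Matroid α := (M✶ ↾ (M.E \ C))✶

/-- A matroid is connected if it is nonempty and cannot be written as the direct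
sum of two nonempty matroids. -/
def Connected (M : Matroid α) : Prop :=
  M.E.Nonempty ∧ ¬ ∃ A B : Set α, A ∪ B = M.E ∧ Disjoint A B ∧ A.Nonempty ∧ B.Nonempty ∧
    ∀ I ⊆ M.E, M.Indep (I ∩ A) → M.Indep (I ∩ B) → M.Indep I

/-- `M` is isomorphic to the affine geometry `AG(d, F)` (of rank `d + 1`): its ground
set is in bijection with the affine space `F^d` in a way matching affine independence. -/
def IsAG (F : Type*) [Field F] (d : ℕ) (M : Matroid α) : Prop :=
  ∃ v : α → (Fin d → F),
    (∀ I ⊆ M.E, (M.Indep I ↔ AffineIndependent F (I.restrict v))) ∧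
    Set.InjOn v M.E ∧
    (∀ w : Fin d → F, ∃ e ∈ M.E, v e = w)

/-- `M` is isomorphic to the projective geometry `PG(k-1, F)` (of rank `k`): its ground
set is in bijection with the set of one-dimensional subspaces of `F^k`, matching
linear independence. -/
def IsPG (F : Type*) [Field F] (k : ℕ) (M : Matroid α) : Prop :=
  ∃ v : α → (Fin k → F),
    (∀ I ⊆ M.E, (M.Indep I ↔ LinearIndependent F (I.restrict v))) ∧
    (∀ e ∈ M.E, v e ≠ 0) ∧
    (∀ e ∈ M.E, ∀ f ∈ M.E,
      Submodule.span F {v e} = Submodule.span F {v f} → e = f) ∧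
    (∀ w : Fin k → F, w ≠ 0 → ∃ e ∈ M.E, Submodule.span F {w} = Submodule.span F {v e})

end SGK

/-!
If every line has at least three points, a flat `F` of corank `n` has at least `2 ^ n - 1`
covers, by induction on `n`. Fix a cover `G` of `F`: every other cover `G'` of `F` spans with `G`
a cover `cl (G ∪ G')` of `G`, and each cover `P` of `G` arises from at least two of them, because
for `x ∈ G \ F` and `y ∈ P \ G` a third point `z` of the line `cl {x, y}` spans a third cover
`cl (F ∪ {z})` of `F` inside `P`. So there are at least `2 ^ r - 1` covers of `cl ∅`, that is,
points; in a simple matroid these are the elements.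
-/

namespace Matroid

variable {α : Type*} {M : Matroid α} {F G G' P X : Set α} {x y z : α}

lemma IsFlat.closure_subset_of_subset (hF : M.IsFlat F) (hXF : X ⊆ F) : M.closure X ⊆ F :=
  hF.closure ▸ M.closure_subset_closure hXF

lemma IsFlat.eq_of_subset_of_eRk_le [M.RankFinite] (hF : M.IsFlat F) (hG : M.IsFlat G)
    (hFG : F ⊆ G) (hGF : M.eRk G ≤ M.eRk F) : F = G := by
  rw [← hF.closure, ← hG.closure]
  exact (M.isRkFinite_set F).closure_eq_closure_of_subset_of_eRk_ge_eRk hFG hGF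

def flatCovers (M : Matroid α) (F : Set α) : Set (Set α) :=
  {G | M.IsFlat G ∧ F ⊆ G ∧ M.eRk G = M.eRk F + 1}

lemma flatCovers_finite (M : Matroid α) [M.Finite] (F : Set α) : (M.flatCovers F).Finite :=
  M.ground_finite.finite_subsets.subset fun _ hG ↦ hG.1.subset_ground

lemma ssubset_of_mem_flatCovers [M.RankFinite] (hG : G ∈ M.flatCovers F) : F ⊂ G := by
  refine hG.2.1.ssubset_of_ne ?_
  rintro rfl
  exact ((ENat.lt_add_one_iff (M.isRkFinite_set F).eRk_lt_top.ne).2 le_rfl).ne hG.2.2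

lemma closure_insert_mem_flatCovers (hF : M.IsFlat F) (hx : x ∈ M.E \ F) :
    M.closure (insert x F) ∈ M.flatCovers F := by
  refine ⟨isFlat_closure _, ?_, ?_⟩
  · exact (subset_insert x F).trans (M.subset_closure _ (insert_subset hx.1 hF.subset_ground))
  · rw [eRk_closure_eq, eRk_insert_eq_add_one (by rwa [hF.closure])]

lemma eq_closure_insert_of_mem_flatCovers [M.RankFinite] (hF : M.IsFlat F)
    (hG : G ∈ M.flatCovers F) (hx : x ∈ G \ F) : G = M.closure (insert x F) := by
  have hxG := closure_insert_mem_flatCovers hF ⟨hG.1.subset_ground hx.1, hx.2⟩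
  refine (hxG.1.eq_of_subset_of_eRk_le hG.1 ?_ ?_).symm
  · exact hG.1.closure_subset_of_subset (insert_subset hx.1 hG.2.1)
  · rw [hG.2.2, hxG.2.2]

lemma flatCovers_eq_of_mem [M.RankFinite] (hF : M.IsFlat F) (hG : G ∈ M.flatCovers F)
    (hG' : G' ∈ M.flatCovers F) (hxG : x ∈ G) (hxG' : x ∈ G') (hxF : x ∉ F) : G = G' := by
  rw [eq_closure_insert_of_mem_flatCovers hF hG ⟨hxG, hxF⟩,
    eq_closure_insert_of_mem_flatCovers hF hG' ⟨hxG', hxF⟩]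

lemma closure_union_mem_flatCovers [M.RankFinite] (hF : M.IsFlat F) (hG : G ∈ M.flatCovers F)
    (hG' : G' ∈ M.flatCovers F) (hne : G ≠ G') : M.closure (G ∪ G') ∈ M.flatCovers G := by
  obtain ⟨t, htG', htF⟩ := exists_of_ssubset (ssubset_of_mem_flatCovers hG')
  have htE : t ∈ M.E := hG'.1.subset_ground htG'
  have htG : t ∉ G := fun htG ↦ hne (flatCovers_eq_of_mem hF hG hG' htG htG' htF)
  have hcl : M.closure (G ∪ G') = M.closure (insert t G) := by
    refine subset_antisymm (M.closure_subset_closure_of_subset_closure (union_subset ?_ ?_))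
      (M.closure_subset_closure (insert_subset (Or.inr htG') subset_union_left))
    · exact (subset_insert t G).trans (M.subset_closure _ (insert_subset htE hG.1.subset_ground))
    · rw [eq_closure_insert_of_mem_flatCovers hF hG' ⟨htG', htF⟩]
      exact M.closure_subset_closure (insert_subset_insert hG.2.1)
  rw [hcl]
  exact closure_insert_mem_flatCovers hG.1 ⟨htE, htG⟩

lemma closure_union_eq_of_subset [M.RankFinite] (hF : M.IsFlat F) (hG : G ∈ M.flatCovers F)
    (hG' : G' ∈ M.flatCovers F) (hne : G ≠ G') (hP : P ∈ M.flatCovers G) (hG'P : G' ⊆ P) :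
    M.closure (G ∪ G') = P := by
  have h := closure_union_mem_flatCovers hF hG hG' hne
  refine h.1.eq_of_subset_of_eRk_le hP.1 (hP.1.closure_subset_of_subset ?_) ?_
  · exact union_subset hP.2.1 hG'P
  · rw [hP.2.2, h.2.2]

lemma notMem_of_mem_closure_pair [M.RankFinite] (hF : M.IsFlat F) (hG : G ∈ M.flatCovers F)
    (hG' : G' ∈ M.flatCovers F) (hne : G ≠ G') (hx : x ∈ G) (hy : y ∈ G' \ F)
    (hz : z ∈ M.closure {x, y}) (hzx : z ∉ M.closure {x}) : z ∉ G := by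
  intro hzG
  have hyzx : y ∈ M.closure {z, x} := (M.closure_exchange ⟨by rwa [pair_comm], hzx⟩).1
  have hyG : y ∈ G := hG.1.closure_subset_of_subset (pair_subset hzG hx) hyzx
  exact hne (flatCovers_eq_of_mem hF hG hG' hyG hy.1 hy.2)

-- Points are the closures of nonloops; every line through two points contains a third one.
def NoTwoPointLines (M : Matroid α) : Prop :=
  ∀ ⦃x y⦄, M.IsNonloop x → y ∈ M.E \ M.closure {x} →
    ∃ z ∈ M.closure {x, y}, z ∉ M.closure {x} ∧ z ∉ M.closure {y}

lemma exists_two_flatCovers_subset [M.RankFinite] (hM : M.NoTwoPointLines) (hF : M.IsFlat F)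
    (hG : G ∈ M.flatCovers F) (hP : P ∈ M.flatCovers G) :
    ∃ G₁ ∈ M.flatCovers F, ∃ G₂ ∈ M.flatCovers F,
      G₁ ≠ G ∧ G₂ ≠ G ∧ G₁ ≠ G₂ ∧ G₁ ⊆ P ∧ G₂ ⊆ P := by
  obtain ⟨x, hxG, hxF⟩ := exists_of_ssubset (ssubset_of_mem_flatCovers hG)
  obtain ⟨y, hyP, hyG⟩ := exists_of_ssubset (ssubset_of_mem_flatCovers hP)
  have hyE : y ∈ M.E := hP.1.subset_ground hyP
  have hyF : y ∉ F := fun h ↦ hyG (hG.2.1 h)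
  have hG₁ := closure_insert_mem_flatCovers hF ⟨hyE, hyF⟩
  have hyG₁ : y ∈ M.closure (insert y F) := M.mem_closure_of_mem' (mem_insert y F)
  have hG₁G : M.closure (insert y F) ≠ G := fun h ↦ hyG (h ▸ hyG₁)
  have hyx : y ∉ M.closure {x} := fun h ↦
    hyG (hG.1.closure_subset_of_subset (singleton_subset_iff.2 hxG) h)
  have hx : M.IsNonloop x := ⟨fun h ↦ hxF (hF.loops_subset h), hG.1.subset_ground hxG⟩
  obtain ⟨z, hz, hzx, hzy⟩ := hM hx ⟨hyE, hyx⟩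
  have hzG : z ∉ G :=
    notMem_of_mem_closure_pair hF hG hG₁ hG₁G.symm hxG ⟨hyG₁, hyF⟩ hz hzx
  have hzG₁ : z ∉ M.closure (insert y F) :=
    notMem_of_mem_closure_pair hF hG₁ hG hG₁G hyG₁ ⟨hxG, hxF⟩ (pair_comm x y ▸ hz) hzy
  have hzP : z ∈ P := hP.1.closure_subset_of_subset (pair_subset (hP.2.1 hxG) hyP) hz
  have hzE : z ∈ M.E := hP.1.subset_ground hzP
  have hzG₂ : z ∈ M.closure (insert z F) := M.mem_closure_of_mem' (mem_insert z F)
  have hFP : F ⊆ P := hG.2.1.trans hP.2.1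
  have hG₂ := closure_insert_mem_flatCovers hF ⟨hzE, fun h ↦ hzG (hG.2.1 h)⟩
  exact ⟨_, hG₁, _, hG₂, hG₁G,
    fun h ↦ hzG (h ▸ hzG₂), fun h ↦ hzG₁ (h ▸ hzG₂),
    hP.1.closure_subset_of_subset (insert_subset hyP hFP),
    hP.1.closure_subset_of_subset (insert_subset hzP hFP)⟩

lemma two_mul_ncard_flatCovers_lt [M.Finite] (hM : M.NoTwoPointLines) (hF : M.IsFlat F)
    (hG : G ∈ M.flatCovers F) : 2 * (M.flatCovers G).ncard < (M.flatCovers F).ncard := by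
  classical
  rw [ncard_eq_toFinset_card _ (M.flatCovers_finite F),
    ncard_eq_toFinset_card _ (M.flatCovers_finite G)]
  set s := (M.flatCovers_finite F).toFinset.erase G
  set t := (M.flatCovers_finite G).toFinset
  have hs : ∀ {G'}, G' ∈ s ↔ G' ≠ G ∧ G' ∈ M.flatCovers F := by simp [s]
  have ht : ∀ {P}, P ∈ t ↔ P ∈ M.flatCovers G := by simp [t]
  have hmaps : ∀ G' ∈ s, M.closure (G ∪ G') ∈ t := fun G' hG' ↦
    ht.2 (closure_union_mem_flatCovers hF hG (hs.1 hG').2 (hs.1 hG').1.symm)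
  have hfibers : ∀ P ∈ t, 2 ≤ (s.filter fun G' ↦ M.closure (G ∪ G') = P).card := by
    intro P hP
    obtain ⟨G₁, hG₁, G₂, hG₂, hG₁G, hG₂G, hG₁₂, hG₁P, hG₂P⟩ :=
      exists_two_flatCovers_subset hM hF hG (ht.1 hP)
    have hfiber : ∀ {G'}, G' ∈ M.flatCovers F → G' ≠ G → G' ⊆ P →
        G' ∈ s.filter fun G' ↦ M.closure (G ∪ G') = P := fun hG' hne hG'P ↦
      Finset.mem_filter.2 ⟨hs.2 ⟨hne, hG'⟩,
        closure_union_eq_of_subset hF hG hG' hne.symm (ht.1 hP) hG'P⟩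
    calc 2 = ({G₁, G₂} : Finset (Set α)).card := (Finset.card_pair hG₁₂).symm
      _ ≤ _ := Finset.card_le_card <| Finset.insert_subset (hfiber hG₁ hG₁G hG₁P)
          (Finset.singleton_subset_iff.2 (hfiber hG₂ hG₂G hG₂P))
  have hcount := Finset.mul_card_image_le_card_of_maps_to hmaps 2 hfibers
  have herase : s.card + 1 = _ :=
    Finset.card_erase_add_one ((M.flatCovers_finite F).mem_toFinset.2 hG)
  omega

lemma two_pow_sub_one_le_ncard_flatCovers [M.Finite] (hM : M.NoTwoPointLines) {n k : ℕ}
    (hF : M.IsFlat F) (hFk : M.eRk F = k) (hk : M.eRank = k + n) :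
    2 ^ n - 1 ≤ (M.flatCovers F).ncard := by
  induction n generalizing k F with
  | zero => simp
  | succ n ih =>
    obtain ⟨x, hxE, hxF⟩ : ∃ x ∈ M.E, x ∉ F := by
      refine not_subset.1 fun hEF ↦ ?_
      rw [eRk_eq_eRank hEF, hk] at hFk
      norm_cast at hFk
      omega
    have hG := closure_insert_mem_flatCovers hF ⟨hxE, hxF⟩
    have hGn := ih (k := k + 1) hG.1 (by rw [hG.2.2, hFk]; norm_cast) (by rw [hk]; push_cast; ring)
    have hFG := two_mul_ncard_flatCovers_lt hM hF hG
    rw [pow_succ]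
    omega

lemma flatCovers_closure_empty_subset [M.RankFinite] :
    M.flatCovers (M.closure ∅) ⊆ (fun x ↦ M.closure {x}) '' M.E := by
  intro G hG
  obtain ⟨x, hxG, hx⟩ := exists_of_ssubset (ssubset_of_mem_flatCovers hG)
  refine ⟨x, hG.1.subset_ground hxG, ?_⟩
  rw [eq_closure_insert_of_mem_flatCovers (isFlat_closure ∅) hG ⟨hxG, hx⟩,
    closure_insert_closure_eq_closure_insert, insert_empty_eq]

theorem two_pow_eRank_sub_one_le_ncard [M.Finite] (hM : M.NoTwoPointLines) {r : ℕ}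
    (hr : M.eRank = r) : 2 ^ r - 1 ≤ M.E.ncard :=
  calc 2 ^ r - 1 ≤ (M.flatCovers (M.closure ∅)).ncard :=
        two_pow_sub_one_le_ncard_flatCovers hM (isFlat_closure ∅) (k := 0)
          (by rw [eRk_closure_eq, eRk_empty, Nat.cast_zero]) (by rw [hr, Nat.cast_zero, zero_add])
    _ ≤ ((fun x ↦ M.closure {x}) '' M.E).ncard :=
        ncard_le_ncard flatCovers_closure_empty_subset (M.ground_finite.image _)
    _ ≤ M.E.ncard := ncard_image_le M.ground_finite

end Matroid

namespace SGK

variable {α : Type*} {M : Matroid α} {L : Set α} {x : α}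

lemma rk_eq_eRk (M : Matroid α) (X : Set α) : rk M X = M.eRk X := by
  have h : {n : ℕ∞ | ∃ I, M.Indep I ∧ I ⊆ X ∧ I.encard = n} = Iic (M.eRk X) := by
    ext n
    rw [mem_Iic, le_eRk_iff]
    exact exists_congr fun I ↦ and_left_comm
  rw [rk, h, csSup_Iic]

lemma Simple.isNonloop (hS : Simple M) (hx : x ∈ M.E) : M.IsNonloop x :=
  indep_singleton.1 (by simpa using hS x hx x hx)

lemma Simple.closure_singleton (hS : Simple M) (hx : x ∈ M.E) : M.closure {x} = {x} := by
  refine subset_antisymm (fun y hy ↦ ?_) (M.subset_closure _ (singleton_subset_iff.2 hx))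
  by_contra hyx
  have hyE : y ∈ M.E := M.mem_ground_of_mem_closure hy
  refine (hS y hyE x hx).notMem_closure_sdiff_of_mem (mem_insert y _) ?_
  rwa [insert_sdiff_of_mem _ (mem_singleton y), sdiff_singleton_eq_self hyx]

lemma Simple.points_eq_image (hS : Simple M) (hL : L ⊆ M.E) :
    points M L = (fun x ↦ {x}) '' L := by
  ext P
  refine ⟨fun ⟨hP, hPL, hPrk⟩ ↦ ?_, ?_⟩
  · rw [rk_eq_eRk, eRk_eq_one_iff hP.subset_ground] at hPrk
    obtain ⟨x, hxP, hx, hPx⟩ := hPrk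
    rw [hS.closure_singleton hx.mem_ground] at hPx
    exact ⟨x, hPL hxP, subset_antisymm (singleton_subset_iff.2 hxP) hPx⟩
  · rintro ⟨x, hxL, rfl⟩
    have hx := hS.isNonloop (hL hxL)
    exact ⟨isFlat_iff_closure_eq.2 (hS.closure_singleton hx.mem_ground),
      singleton_subset_iff.2 hxL, by rw [rk_eq_eRk, hx.eRk_eq]⟩

lemma Simple.noTwoPointLines (hS : Simple M)
    (hM : ∀ L, IsLine M L → (points M L).encard ≠ 2) : M.NoTwoPointLines := by
  intro x y hx ⟨hy, hyx⟩
  replace hx := hx.mem_ground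
  rw [hS.closure_singleton hx, mem_singleton_iff] at hyx
  have hxy : {x, y} ⊆ M.closure {x, y} := M.subset_closure _ (pair_subset hx hy)
  have hline : IsLine M (M.closure {x, y}) := by
    refine ⟨isFlat_closure _, ?_⟩
    rw [rk_eq_eRk, eRk_closure_eq, (hS x hx y hy).eRk_eq_encard, encard_pair (Ne.symm hyx)]
  have hne : {x, y} ≠ M.closure {x, y} := by
    intro h
    apply hM _ hline
    rw [hS.points_eq_image (M.closure_subset_ground _), singleton_injective.encard_image, ← h,
      encard_pair (Ne.symm hyx)]
  obtain ⟨z, hz, hzxy⟩ := exists_of_ssubset (hxy.ssubset_of_ne hne)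
  rw [hS.closure_singleton hx, hS.closure_singleton hy]
  exact ⟨z, hz, fun h ↦ hzxy (.inl h), fun h ↦ hzxy (.inr h)⟩

end SGK

/-- Murty's theorem: every simple rank-`r` matroid with fewer than `2^r - 1` elements has a
line containing exactly two points. -/
theorem stmt_4 {α : Type*} (r : ℕ) (M : Matroid α) (hS : SGK.Simple M)
    (hr : SGK.Rank M = (r : ℕ∞))
    (hcard : M.E.encard < ((2 ^ r - 1 : ℕ) : ℕ∞)) :
    ∃ L, SGK.IsLine M L ∧ (SGK.points M L).encard = 2 := by
  by_contra! hM
  have hE : M.E.Finite := encard_lt_top_iff.1 (hcard.trans (WithTop.coe_lt_top _))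
  have : M.Finite := ⟨hE⟩
  have hrank : M.eRank = r := by rwa [SGK.Rank, SGK.rk_eq_eRk, eRk_ground] at hr
  have hle := two_pow_eRank_sub_one_le_ncard (hS.noTwoPointLines hM) hrank
  rw [← hE.cast_ncard_eq, Nat.cast_lt] at hcard
  omega
end

section
/- For every prime power q and positive integer t there is an integer R_q(t) such that any 2-colouring of the points of the projective geometry PG(R_q(t)−1, q) admits a monochromatic rank-t flat. -/
open Matroid Set

/-!
A colouring of the points of `PG(N - 1, q)` is a colouring of the nonzero vectors of `𝔽_q^N`
that is invariant under scaling. Iterating the multidimensional Hales–Jewett theorem yields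
vectors `u₀, …, u_{L-1}` such that each `uᵢ` lies outside the span `Wᵢ` of the later ones
and the colouring is constant on the coset `uᵢ + Wᵢ`. By pigeonhole, `t` of the `uᵢ` have the
same colour, and every nonzero vector of their span is a nonzero multiple of a vector in the
coset of the first `uᵢ` it involves, so the span is monochromatic.
-/

namespace Combinatorics.Subspace

variable {η ι R : Type*} [Semiring R]

def linearPart (l : Combinatorics.Subspace η R ι) : (η → R) →ₗ[R] ι → R :=
  LinearMap.pi fun i => (l.idxFun i).elim (fun _ => 0) LinearMap.proj

lemma apply_eq_add_linearPart (l : Combinatorics.Subspace η R ι) (x : η → R) :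
    l x = l 0 + l.linearPart x := by
  funext i
  rcases h : l.idxFun i with a | e <;> simp [linearPart, apply_def, h]

lemma linearPart_injective (l : Combinatorics.Subspace η R ι) :
    Function.Injective l.linearPart := by
  intro x y hxy
  funext e
  obtain ⟨i, hi⟩ := l.proper e
  simpa [linearPart, hi] using congrFun hxy i

end Combinatorics.Subspace

open Submodule

theorem exists_mono_affine_subspace_avoiding_zero (F κ : Type*) [Field F] [Finite F] [Finite κ]
    (d : ℕ) :
    ∃ n, ∀ C : (Fin n → F) → κ, ∃ (φ : (Fin d → F) →ₗ[F] Fin n → F) (u : Fin n → F),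
      Function.Injective φ ∧ u ∉ LinearMap.range φ ∧ ∀ x, C (u + φ x) = C u := by
  obtain ⟨m, hm⟩ := Combinatorics.Subspace.exists_mono_in_high_dimension_fin F κ (Fin d)
  refine ⟨m + 1, fun C => ?_⟩
  -- colour `F^m` through the affine hyperplane `x₀ = 1` of `F^(m+1)`, which misses the origin
  obtain ⟨l, c, hl⟩ := hm fun y => C (Fin.cons 1 y)
  let e := Fin.consLinearEquiv F fun _ : Fin (m + 1) => F
  have he : ∀ x, e (1, l 0) + e (0, l.linearPart x) = Fin.cons 1 (l x) := by
    intro x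
    rw [← map_add, Prod.mk_add_mk, add_zero, ← l.apply_eq_add_linearPart]
    rfl
  refine ⟨e.toLinearMap ∘ₗ LinearMap.inr F F _ ∘ₗ l.linearPart, e (1, l 0), ?_, ?_, ?_⟩
  · exact e.injective.comp (LinearMap.inr_injective.comp l.linearPart_injective)
  · rintro ⟨x, hx⟩
    simpa [e] using congrFun hx 0
  · intro x
    change C (e (1, l 0) + e (0, l.linearPart x)) = C (Fin.cons 1 (l 0))
    rw [he]
    exact (hl x).trans (hl 0).symm

section Chain

variable (F : Type*) {V W κ ι : Type*} [Field F] [AddCommGroup V] [Module F V]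
  [AddCommGroup W] [Module F W]

def IsMonoCosetChain [Preorder ι] (C : V → κ) (u : ι → V) : Prop :=
  ∀ i, u i ∉ span F (u '' Ioi i) ∧ ∀ w ∈ span F (u '' Ioi i), C (u i + w) = C (u i)

variable {F}

theorem IsMonoCosetChain.map [Preorder ι] {C : W → κ} {u : ι → V} (φ : V →ₗ[F] W)
    (hφ : Function.Injective φ) (h : IsMonoCosetChain F (C ∘ φ) u) :
    IsMonoCosetChain F C (φ ∘ u) := by
  intro i
  rw [image_comp, span_image]
  refine ⟨fun ⟨y, hy, hyu⟩ => (h i).1 (hφ hyu ▸ hy), ?_⟩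
  rintro _ ⟨w, hw, rfl⟩
  simpa [← map_add] using (h i).2 w hw

theorem IsMonoCosetChain.cons {L : ℕ} {C : V → κ} {u : Fin L → V} {u₀ : V}
    (h : IsMonoCosetChain F C u) (hu₀ : u₀ ∉ span F (range u))
    (hC : ∀ w ∈ span F (range u), C (u₀ + w) = C u₀) :
    IsMonoCosetChain F C (Fin.cons u₀ u : Fin (L + 1) → V) := by
  intro i
  induction i using Fin.cases with
  | zero =>
    have : (Fin.cons u₀ u : Fin (L + 1) → V) '' Ioi 0 = range u := by
      rw [show Ioi (0 : Fin (L + 1)) = range Fin.succ by ext j; simp [Fin.pos_iff_ne_zero],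
        ← range_comp]
      rfl
    simpa [this] using ⟨hu₀, hC⟩
  | succ k =>
    rw [← Fin.image_succ_Ioi, image_image]
    simpa using h k

theorem IsMonoCosetChain.comp_orderEmbedding {ι' : Type*} [Preorder ι] [Preorder ι']
    {C : V → κ} {u : ι → V} (h : IsMonoCosetChain F C u) (σ : ι' ↪o ι) :
    IsMonoCosetChain F C (u ∘ σ) := by
  have hsub : ∀ j, span F ((u ∘ σ) '' Ioi j) ≤ span F (u '' Ioi (σ j)) := fun j =>
    span_mono <| by
      rw [image_comp]
      exact image_mono (image_subset_iff.2 fun k hk => σ.strictMono hk)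
  exact fun j => ⟨fun hj => (h (σ j)).1 (hsub j hj), fun w hw => (h (σ j)).2 w (hsub j hw)⟩

theorem Finsupp.exists_linearCombination_eq_smul_add [LinearOrder ι] (u : ι → V)
    {c : ι →₀ F} (hc : c ≠ 0) :
    ∃ i, c i ≠ 0 ∧ ∃ w ∈ span F (u '' Ioi i),
      Finsupp.linearCombination F u c = c i • (u i + w) := by
  classical
  have hne : c.support.Nonempty := Finsupp.support_nonempty_iff.2 hc
  have hmem := c.support.min'_mem hne
  set i := c.support.min' hne
  have hi : c i ≠ 0 := Finsupp.mem_support_iff.1 hmem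
  refine ⟨i, hi, (c i)⁻¹ • ∑ j ∈ c.support.erase i, c j • u j, ?_, ?_⟩
  · refine smul_mem _ _ (sum_mem fun j hj => smul_mem _ _ (subset_span ⟨j, ?_, rfl⟩))
    exact lt_of_le_of_ne (c.support.min'_le j (Finset.mem_of_mem_erase hj))
      (Finset.ne_of_mem_erase hj).symm
  · rw [Finsupp.linearCombination_apply, Finsupp.sum, ← c.support.add_sum_erase _ hmem,
      smul_add, smul_inv_smul₀ hi]

theorem IsMonoCosetChain.linearIndependent [LinearOrder ι] {C : V → κ} {u : ι → V}
    (h : IsMonoCosetChain F C u) : LinearIndependent F u := by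
  rw [linearIndependent_iff]
  intro c hc
  by_contra hne
  obtain ⟨i, hi, w, hw, heq⟩ := Finsupp.exists_linearCombination_eq_smul_add u hne
  rw [hc, eq_comm, smul_eq_zero] at heq
  have : u i = -w := eq_neg_of_add_eq_zero_left (heq.resolve_left hi)
  exact (h i).1 (this ▸ neg_mem hw)

theorem IsMonoCosetChain.apply_eq_of_mem_span [LinearOrder ι] {C : V → κ} {u : ι → V}
    (h : IsMonoCosetChain F C u) (hC : ∀ a : F, a ≠ 0 → ∀ z, C (a • z) = C z) {b : κ}
    (hb : ∀ i, C (u i) = b) {z : V} (hz : z ∈ span F (range u)) (hz0 : z ≠ 0) : C z = b := by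
  obtain ⟨c, rfl⟩ := Finsupp.mem_span_range_iff_exists_finsupp.1 hz
  have hc : c ≠ 0 := by
    rintro rfl
    simp at hz0
  obtain ⟨i, hi, w, hw, heq⟩ := Finsupp.exists_linearCombination_eq_smul_add u hc
  rw [← Finsupp.linearCombination_apply, heq, hC _ hi, (h i).2 w hw, hb]

variable (F κ)

theorem exists_isMonoCosetChain [Finite F] [Finite κ] (L : ℕ) :
    ∃ n, ∀ C : (Fin n → F) → κ, ∃ u : Fin L → Fin n → F, IsMonoCosetChain F C u := by
  induction L with
  | zero => exact ⟨0, fun _ => ⟨Fin.elim0, fun i => i.elim0⟩⟩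
  | succ L ih =>
    obtain ⟨d, hd⟩ := ih
    obtain ⟨n, hn⟩ := exists_mono_affine_subspace_avoiding_zero F κ d
    refine ⟨n, fun C => ?_⟩
    obtain ⟨φ, u₀, hφ, hu₀, hC⟩ := hn C
    obtain ⟨u, hu⟩ := hd (C ∘ φ)
    have hspan : span F (range (φ ∘ u)) ≤ LinearMap.range φ :=
      span_le.2 (range_comp_subset_range _ _)
    refine ⟨Fin.cons u₀ (φ ∘ u), (hu.map φ hφ).cons (fun h => hu₀ (hspan h)) fun w hw => ?_⟩
    obtain ⟨x, rfl⟩ := hspan hw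
    exact hC x

end Chain

theorem exists_orderEmbedding_fin_apply_eq {α κ : Type*} [LinearOrder α] [Fintype α]
    [Fintype κ] [Nonempty κ] (f : α → κ) {t : ℕ} (ht : Fintype.card κ * t ≤ Fintype.card α) :
    ∃ (σ : Fin t ↪o α) (b : κ), ∀ j, f (σ j) = b := by
  classical
  obtain ⟨b, hb⟩ := Fintype.exists_le_card_fiber_of_mul_le_card (f := f) ht
  obtain ⟨s, hs, rfl⟩ := Finset.exists_subset_card_eq hb
  exact ⟨s.orderEmbOfFin rfl, b, fun j => (Finset.mem_filter.1 (hs (s.orderEmbOfFin_mem rfl j))).2⟩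

theorem exists_linearIndependent_mono_span (F κ : Type*) [Field F] [Finite F] [Fintype κ]
    [Nonempty κ] (t : ℕ) :
    ∃ N, ∀ C : (Fin N → F) → κ, (∀ a : F, a ≠ 0 → ∀ z, C (a • z) = C z) →
      ∃ x : Fin t → Fin N → F, LinearIndependent F x ∧
        ∃ b, ∀ z ∈ span F (range x), z ≠ 0 → C z = b := by
  obtain ⟨N, hN⟩ := exists_isMonoCosetChain F κ (Fintype.card κ * t)
  refine ⟨N, fun C hC => ?_⟩
  obtain ⟨u, hu⟩ := hN C
  obtain ⟨σ, b, hb⟩ := exists_orderEmbedding_fin_apply_eq (C ∘ u) (t := t) (by simp)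
  have hx := hu.comp_orderEmbedding σ
  exact ⟨u ∘ σ, hx.linearIndependent, b, fun z hz hz0 => hx.apply_eq_of_mem_span hC hb hz hz0⟩

theorem SGK.rk_eq_eRk_s10 {α : Type*} (M : Matroid α) (X : Set α) : SGK.rk M X = M.eRk X := by
  refine le_antisymm (sSup_le ?_) ?_
  · rintro n ⟨I, hI, hIX, rfl⟩
    exact hI.encard_le_eRk_of_subset hIX
  · obtain ⟨I, hIX, hI, hIc⟩ := le_eRk_iff.1 (le_refl (M.eRk X))
    exact le_sSup ⟨I, hI, hIX, hIc⟩

section Representation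

variable {α F V : Type*} [Field F] [AddCommGroup V] [Module F V] {M : Matroid α} {v : α → V}

theorem Matroid.isFlat_setOf_mem_submodule (hv : ∀ I ⊆ M.E, M.Indep I ↔ LinearIndepOn F v I)
    (U : Submodule F V) : M.IsFlat {e ∈ M.E | v e ∈ U} := by
  refine ⟨fun I X hIF hIX y hy => ?_, fun e he => he.1⟩
  by_contra hyF
  have hyE : y ∈ M.E := hIX.subset_ground hy
  have hIE : I ⊆ M.E := hIF.indep.subset_ground
  have hyI : y ∉ I := fun h => hyF (hIF.subset h)
  have hspan : span F (v '' I) ≤ U := span_le.2 <| by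
    rintro _ ⟨e, he, rfl⟩
    exact (hIF.subset he).2
  have hins : M.Indep (insert y I) := by
    rw [hv _ (insert_subset hyE hIE), linearIndepOn_insert hyI]
    exact ⟨(hv I hIE).1 hIF.indep, fun h => hyF ⟨hyE, hspan h⟩⟩
  exact hyI (hIX.mem_of_insert_indep hy hins)

theorem Matroid.eRk_setOf_mem_span_range (hv : ∀ I ⊆ M.E, M.Indep I ↔ LinearIndepOn F v I)
    (hsurj : ∀ w : V, w ≠ 0 → ∃ e ∈ M.E, span F {w} = span F {v e})
    {ι : Type*} [Fintype ι] {x : ι → V} (hx : LinearIndependent F x) :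
    M.eRk {e ∈ M.E | v e ∈ span F (range x)} = Fintype.card ι := by
  refine le_antisymm (eRk_le_iff.2 fun I hIU hI => ?_) (le_eRk_iff.2 ?_)
  · have hspan : span F (v '' I) ≤ span F (range x) := span_le.2 <| by
      rintro _ ⟨e, he, rfl⟩
      exact (hIU he).2
    rw [← toENat_rank_span_set ((hv I hI.subset_ground).1 hI)]
    calc (Module.rank F (span F (v '' I))).toENat
        ≤ (Module.rank F (span F (range x))).toENat :=
          Cardinal.toENat.monotone' (Submodule.rank_mono hspan)
      _ = Fintype.card ι := by
          rw [← image_univ, toENat_rank_span_set (linearIndepOn_univ.2 hx), encard_univ,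
            ENat.card_eq_coe_fintype_card]
  · choose e he hspan using fun i => hsurj (x i) (hx.ne_zero i)
    choose a ha using fun i => span_singleton_eq_span_singleton.1 (hspan i)
    have hve : LinearIndependent F (v ∘ e) := by
      convert hx.units_smul a using 1
      funext i
      exact (ha i).symm
    have hinj : Function.Injective e := hve.injective.of_comp
    refine ⟨range e, ?_, ?_, ?_⟩
    · rintro _ ⟨i, rfl⟩
      exact ⟨he i, ha i ▸ smul_mem _ _ (subset_span ⟨i, rfl⟩)⟩
    · rw [hv _ (range_subset_iff.2 he)]
      exact (linearIndepOn_range_iff hinj v).2 hve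
    · rw [← image_univ, hinj.encard_image, encard_univ, ENat.card_eq_coe_fintype_card]

end Representation

theorem exists_smul_invariant_lift {α F V κ : Type*} [Field F] [AddCommGroup V] [Module F V]
    [Nonempty κ] {S : Set α} {v : α → V}
    (hinj : ∀ e ∈ S, ∀ f ∈ S, span F {v e} = span F {v f} → e = f) (c : α → κ) :
    ∃ C : V → κ, (∀ a : F, a ≠ 0 → ∀ z, C (a • z) = C z) ∧ ∀ e ∈ S, C (v e) = c e := by
  classical
  refine ⟨fun z => if h : ∃ e ∈ S, span F {z} = span F {v e} then c h.choose
    else Classical.arbitrary κ, fun a ha z => ?_, fun e he => ?_⟩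
  · simp only [span_singleton_smul_eq (IsUnit.mk0 a ha)]
  · have h : ∃ f ∈ S, span F {v e} = span F {v f} := ⟨e, he, rfl⟩
    obtain ⟨hf, hef⟩ := h.choose_spec
    simp only [dif_pos h, ← hinj e he _ hf hef]

/-- Graham–Leeb–Rothschild geometric Ramsey theorem: for every finite field of order `q`
(a prime power) and positive integer `t`, there is `N` such that any 2-colouring of the
points of `PG(N - 1, q)` admits a monochromatic rank-`t` flat. -/
theorem stmt_10 (F : Type) [Field F] [Fintype F] (t : ℕ) (ht : 1 ≤ t) :
    ∃ N : ℕ, 1 ≤ N ∧ ∀ (α : Type) (M : Matroid α), SGK.IsPG F N M →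
      ∀ c : α → Bool, ∃ Fl, M.IsFlat Fl ∧ SGK.rk M Fl = (t : ℕ∞) ∧
        ∃ i, ∀ x ∈ Fl, c x = i := by
  obtain ⟨N, hN⟩ := exists_linearIndependent_mono_span F Bool t
  have htN : t ≤ N := by
    obtain ⟨x, hx, -⟩ := hN (fun _ => true) fun _ _ _ => rfl
    simpa using hx.fintype_card_le_finrank
  refine ⟨N, ht.trans htN, fun α M ⟨v, hv, hv0, hinj, hsurj⟩ c => ?_⟩
  obtain ⟨C, hCsmul, hCv⟩ := exists_smul_invariant_lift hinj c
  obtain ⟨x, hx, b, hb⟩ := hN C hCsmul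
  refine ⟨{e ∈ M.E | v e ∈ span F (range x)}, isFlat_setOf_mem_submodule hv _, ?_, b, ?_⟩
  · rw [SGK.rk_eq_eRk_s10, eRk_setOf_mem_span_range hv hsurj hx, Fintype.card_fin]
  · rintro e ⟨he, hex⟩
    rw [← hCv e he]
    exact hb _ hex (hv0 e he)
end
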